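/- arXiv:chao-dyn/9310004 — 8 statements merged into one kernel-verified Lean document; each statement's English description precedes it below -/
import Mathlib

section
/- Let S, C, N₀, N₁ ∈ ℝ with S² + C² = 1, and let v₀, v₁ ∈ ℝ with v₁ ≠ 0. Then the determinant of the 2×2 matrix with rows [ (N₀S − v₀C)/v₁ , S/v₁ ] and [ (N₀N₁/v₁ − v₀)S − (N₀ + N₁v₀/v₁)C , N₁S/v₁ − C ] equals v₀/v₁. -/
/-- The Jacobian of the impact map `P_I` in `(φ, v)` coordinates has determinant
`v₀ / v₁`, where `S = sin (t₁ - t₀)`, `C = cos (t₁ - t₀)` and `N_i` are the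
accelerations just before the impacts. -/
theorem impact_map_jacobian_det
    (S C N₀ N₁ v₀ v₁ : ℝ) (h : S ^ 2 + C ^ 2 = 1) (hv : v₁ ≠ 0) :
    (Matrix.det !![(N₀ * S - v₀ * C) / v₁, S / v₁;
        (N₀ * N₁ / v₁ - v₀) * S - (N₀ + N₁ * v₀ / v₁) * C, N₁ * S / v₁ - C]) =
      v₀ / v₁ := by
  calc _ = v₀ * (S ^ 2 + C ^ 2) / v₁ := by
        rw [Matrix.det_fin_two_of]
        field_simp
        ring
    _ = v₀ / v₁ := by rw [h, mul_one]
end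

section
/- Let S, C, N₀, N₁ ∈ ℝ with S² + C² = 1, and let z₀, z₁ > 0. Then the determinant of the 2×2 matrix with rows [ (N₀S − √z₀·C)/√z₁ , S/(2√(z₀z₁)) ] and [ 2(N₀N₁ − √(z₀z₁))S − 2(N₀√z₁ + N₁√z₀)C , (N₁S − √z₁·C)/√z₀ ] equals 1. -/
theorem det_impact_jacobian_eq_sq_add_sq (S C N₀ N₁ a b : ℝ) (ha : a ≠ 0) (hb : b ≠ 0) :
    Matrix.det !![(N₀ * S - a * C) / b, S / (2 * (a * b));
        2 * (N₀ * N₁ - a * b) * S - 2 * (N₀ * b + N₁ * a) * C, (N₁ * S - b * C) / a] =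
      S ^ 2 + C ^ 2 := by
  rw [Matrix.det_fin_two_of]
  field_simp
  ring

/-- The Jacobian of the impact map `P_I` in the area-preserving coordinates
`(φ, z)` with `z = v²` has determinant `1`, where `S = sin (t₁ - t₀)`,
`C = cos (t₁ - t₀)` and `N_i` are the accelerations just before the impacts. -/
theorem impact_map_jacobian_det_area_preserving
    (S C N₀ N₁ z₀ z₁ : ℝ) (h : S ^ 2 + C ^ 2 = 1) (hz₀ : 0 < z₀) (hz₁ : 0 < z₁) :
    (Matrix.det !![(N₀ * S - Real.sqrt z₀ * C) / Real.sqrt z₁,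
        S / (2 * Real.sqrt (z₀ * z₁));
        2 * (N₀ * N₁ - Real.sqrt (z₀ * z₁)) * S -
          2 * (N₀ * Real.sqrt z₁ + N₁ * Real.sqrt z₀) * C,
        (N₁ * S - Real.sqrt z₁ * C) / Real.sqrt z₀]) = 1 := by
  rw [Real.sqrt_mul hz₀.le, ← h]
  exact det_impact_jacobian_eq_sq_add_sq S C N₀ N₁ _ _
    (Real.sqrt_pos.mpr hz₀).ne' (Real.sqrt_pos.mpr hz₁).ne'
end

section
/- Let ω > 0 with ω ≠ 1, γ = 1/(1−ω²), σ ∈ ℝ. For any t₀ ∈ ℝ and any v₀ > 0, there exists t₁ > t₀ such that x(t₁; t₀, v₀) = σ, where x(t; t₀, v₀) = (σ − γ·cos(ωt₀))·cos(t−t₀) + (−v₀ + ωγ·sin(ωt₀))·sin(t−t₀) + γ·cos(ωt). In other words, every impact of the elastic impact oscillator is followed by another impact, so the impact map is defined everywhere. -/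
/-!
After an impact at `t₀` the motion is `x (t₀ + u) = P u + Q (ω * u)` with `P`, `Q`
`2π`-periodic, and it leaves the wall with velocity `-v₀ < 0`; so it suffices to find some
`u > 0` with `x (t₀ + u) ≥ σ` and apply the intermediate value theorem. For rational `ω` both
oscillations are back in phase after a common period. For irrational `ω`, one of `P`, `Q`
exceeds its initial value somewhere, since otherwise `u = 0` would be a maximum of
`x (t₀ + u)`, contradicting `x' t₀ ≠ 0`; sampling at multiples of the period of the other
oscillation freezes it, and the density of an irrational rotation of the circle brings the
first one into that region.
-/

open Real Function Set Filter

theorem HasDerivAt.exists_gt_lt_of_neg {f : ℝ → ℝ} {d x : ℝ} (hf : HasDerivAt f d x)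
    (hd : d < 0) : ∃ y > x, f y < f x := by
  obtain ⟨t, hslope, ht : 0 < t⟩ :=
    ((hf.tendsto_slope_zero_right.eventually (gt_mem_nhds hd)).and self_mem_nhdsWithin).exists
  rw [smul_eq_mul] at hslope
  exact ⟨x + t, lt_add_of_pos_right x ht, sub_neg.1 (neg_of_mul_neg_right hslope (by positivity))⟩

theorem HasDerivAt.exists_gt_eq_of_neg {f : ℝ → ℝ} {d x : ℝ} (hfc : Continuous f)
    (hf : HasDerivAt f d x) (hd : d < 0) (hret : ∃ y > x, f x ≤ f y) : ∃ y > x, f y = f x := by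
  obtain ⟨y₁, hxy₁, hdip⟩ := hf.exists_gt_lt_of_neg hd
  obtain ⟨y₂, hxy₂, hrise⟩ := hret
  obtain ⟨y, hy, hfy⟩ := intermediate_value_uIcc hfc.continuousOn
    (mem_uIcc.2 (Or.inl ⟨hdip.le, hrise⟩))
  exact ⟨y, lt_of_lt_of_le (lt_min hxy₁ hxy₂) hy.1, hfy⟩

theorem Function.Periodic.exists_nat_mul_gt_apply_zero {f : ℝ → ℝ} {p a s : ℝ} (hp : 0 < p)
    (hf : Periodic f p) (hfc : Continuous f) (ha : Irrational (a / p)) (hs : f 0 < f s) :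
    ∃ n : ℕ, 0 < n ∧ f 0 < f (n * a) := by
  have : Fact (0 < p) := ⟨hp⟩
  have hdense : DenseRange (fun n : ℕ ↦ n • (a : AddCircle p)) :=
    denseRange_zsmul_iff_nsmul.mp (AddCircle.denseRange_zsmul_coe_iff.mpr ha)
  have hF : Continuous hf.lift := hfc.quotient_liftOn' _
  obtain ⟨n, hn⟩ := hdense.exists_mem_open (isOpen_lt continuous_const hF) ⟨s, hs⟩
  rw [mem_ofPred_eq, ← AddCircle.coe_nsmul, nsmul_eq_mul, hf.lift_coe] at hn
  refine ⟨n, Nat.pos_of_ne_zero ?_, hn⟩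
  rintro rfl
  simp at hn

theorem exists_pos_le_add_comp_mul {P Q : ℝ → ℝ} {p ω d : ℝ} (hp : 0 < p) (hP : Periodic P p)
    (hQ : Periodic Q p) (hPc : Continuous P) (hQc : Continuous Q) (hω : 0 < ω)
    (hd : HasDerivAt (fun u ↦ P u + Q (ω * u)) d 0) (hd0 : d ≠ 0) :
    ∃ u > 0, P 0 + Q 0 ≤ P u + Q (ω * u) := by
  by_cases hirr : Irrational ω
  · have hmax : (∃ s, P 0 < P s) ∨ ∃ s, Q 0 < Q s := by
      by_contra! hle
      refine hd0 (IsLocalMax.hasDerivAt_eq_zero (Eventually.of_forall fun u ↦ ?_) hd)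
      simpa using add_le_add (hle.1 u) (hle.2 (ω * u))
    rcases hmax with ⟨s, hs⟩ | ⟨s, hs⟩
    · obtain ⟨n, hn, hPn⟩ := hP.exists_nat_mul_gt_apply_zero (a := p / ω) hp hPc
        (by simpa [div_div_cancel_left' hp.ne'] using hirr.inv) hs
      refine ⟨n * (p / ω), by positivity, ?_⟩
      have hphase : ω * (n * (p / ω)) = n * p := by field_simp
      rw [hphase, hQ.nat_mul_eq]
      linarith
    · obtain ⟨n, hn, hQn⟩ := hQ.exists_nat_mul_gt_apply_zero (a := ω * p) hp hQc
        (by rwa [mul_div_cancel_right₀ _ hp.ne']) hs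
      refine ⟨n * p, by positivity, ?_⟩
      rw [hP.nat_mul_eq, mul_left_comm]
      linarith
  · obtain ⟨r, rfl⟩ := not_not.1 hirr
    refine ⟨r.den * p, by positivity, ?_⟩
    rw [hP.nat_mul_eq, ← mul_assoc, ← Rat.cast_natCast, ← Rat.cast_mul, Rat.mul_den_eq_num,
      Rat.cast_intCast, hQ.int_mul_eq]

theorem impact_oscillator_next_impact_exists_general
    (ω σ γ t₀ v₀ : ℝ) (hω : 0 < ω)
    (hv₀ : 0 < v₀)
    (x : ℝ → ℝ)
    (hx : ∀ t, x t = (σ - γ * Real.cos (ω * t₀)) * Real.cos (t - t₀) +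
      (-v₀ + ω * γ * Real.sin (ω * t₀)) * Real.sin (t - t₀) + γ * Real.cos (ω * t)) :
    ∃ t₁ > t₀, x t₁ = σ := by
  set A := σ - γ * cos (ω * t₀)
  set B := -v₀ + ω * γ * sin (ω * t₀)
  set P : ℝ → ℝ := fun u ↦ A * cos u + B * sin u
  set Q : ℝ → ℝ := fun ψ ↦ γ * cos (ω * t₀ + ψ)
  have hx_eq : x = fun t ↦ A * cos (t - t₀) + B * sin (t - t₀) + γ * cos (ω * t) := funext hx
  have hx_shift : (fun u ↦ x (t₀ + u)) = fun u ↦ P u + Q (ω * u) := by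
    funext u
    simp [hx_eq, P, Q, mul_add]
  have hxt₀ : x t₀ = σ := by simp [hx_eq, A]
  have hσ : P 0 + Q 0 = σ := by simp [P, Q, A]
  have hderiv : HasDerivAt x (-v₀) t₀ := by
    have := ((((hasDerivAt_id t₀).sub_const t₀).cos.const_mul A).add
      (((hasDerivAt_id t₀).sub_const t₀).sin.const_mul B)).add
      (((hasDerivAt_id t₀).const_mul ω).cos.const_mul γ)
    rw [hx_eq]
    refine this.congr_deriv ?_
    simp only [id, sub_self, sin_zero, cos_zero, B]
    ring
  have hderiv_shift : HasDerivAt (fun u ↦ P u + Q (ω * u)) (-v₀) 0 :=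
    hx_shift ▸ HasDerivAt.comp_const_add t₀ 0 (by simpa using hderiv)
  obtain ⟨u, hu, hret⟩ := exists_pos_le_add_comp_mul two_pi_pos
    (fun u ↦ by simp only [P, cos_add_two_pi, sin_add_two_pi])
    (fun ψ ↦ by simp only [Q, ← add_assoc, cos_add_two_pi]) (by fun_prop) (by fun_prop) hω
    hderiv_shift (neg_ne_zero.2 hv₀.ne')
  obtain ⟨t₁, ht₁, hxt₁⟩ := hderiv.exists_gt_eq_of_neg (hx_eq ▸ by fun_prop) (neg_neg_of_pos hv₀)
    ⟨t₀ + u, lt_add_of_pos_right t₀ hu, by rwa [hxt₀, ← hσ, congrFun hx_shift u]⟩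
  exact ⟨t₁, ht₁, hxt₁.trans hxt₀⟩

/-- Every impact of the elastic impact oscillator is followed by another impact:
the free motion starting from the wall returns to the wall at some later time,
so the impact map is defined everywhere. -/
theorem impact_oscillator_next_impact_exists
    (ω σ γ t₀ v₀ : ℝ) (hω : 0 < ω) (hω1 : ω ≠ 1) (hγ : γ = 1 / (1 - ω ^ 2))
    (hv₀ : 0 < v₀)
    (x : ℝ → ℝ)
    (hx : ∀ t, x t = (σ - γ * Real.cos (ω * t₀)) * Real.cos (t - t₀) +
      (-v₀ + ω * γ * Real.sin (ω * t₀)) * Real.sin (t - t₀) + γ * Real.cos (ω * t)) :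
    ∃ t₁ > t₀, x t₁ = σ :=
  impact_oscillator_next_impact_exists_general ω σ γ t₀ v₀ hω hv₀ x hx
end

section
/- Let ω > 0 with ω ≠ 1, γ = 1/(1−ω²), σ ∈ ℝ, and fix t₀ ∈ ℝ. For v₀ > 0 let t₁(v₀) = inf{ t > t₀ : x(t; t₀, v₀) = σ } be the time of the next impact, where x(t; t₀, v₀) = (σ − γ·cos(ωt₀))·cos(t−t₀) + (−v₀ + ωγ·sin(ωt₀))·sin(t−t₀) + γ·cos(ωt). Then for all sufficiently large v₀ the infimum is attained with t₁(v₀) ∈ (t₀, t₀ + 2π), and as v₀ → ∞ one has t₁(v₀) − t₀ → π and v₀·(t₁(v₀) − t₀ − π) → g(t₀), where g(t) = 2σ − γ·(cos(ωt) + cos(ω(t+π))). In particular the time between impacts tends to π as the impact velocity increases. -/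
/-! In the time `s = t - t₀` since the impact, `x v (t₀ + s) = σ` reads `v * sin s = h s` for a
continuous `h` with `|h s| ≤ K * |s|`. For large `v`, Jordan's inequality `sin s ≥ 2 s / π` gives
`v * sin s > h s` on `(0, π - δ]` and `v * sin s < h s` at `π + δ`, where `δ = O(1 / v)`, so the
first positive solution is within `δ` of `π`. Writing it as `π + u`, the equation becomes
`v * sin u = -h (π + u) → -h π`, while `v * (u - sin u) = O(v * u ^ 3) → 0`. -/

open Real Filter Topology

theorem Real.two_mul_div_pi_sq_mul_le_sin {s δ : ℝ} (hs : 0 ≤ s) (hδ : 0 ≤ δ) (hsδ : s ≤ π - δ) :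
    2 * δ / π ^ 2 * s ≤ sin s := by
  have hπ := pi_pos
  rcases le_total s (π / 2) with hs2 | hs2
  · have hcoef : 2 * δ / π ^ 2 ≤ 2 / π := by
      rw [div_le_div_iff₀ (by positivity) hπ]
      nlinarith
    calc 2 * δ / π ^ 2 * s ≤ 2 / π * s := by gcongr
      _ ≤ sin s := mul_le_sin hs hs2
  · calc 2 * δ / π ^ 2 * s = 2 / π * δ * (s / π) := by field_simp
      _ ≤ 2 / π * δ := mul_le_of_le_one_right (by positivity) ((div_le_one hπ).2 (by linarith))
      _ ≤ 2 / π * (π - s) := by gcongr; linarith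
      _ ≤ sin (π - s) := mul_le_sin (by linarith) (by linarith)
      _ = sin s := sin_pi_sub s

noncomputable def firstPosSolution (h : ℝ → ℝ) (v : ℝ) : ℝ :=
  sInf {s | 0 < s ∧ v * sin s = h s}

section FirstPosSolution

variable {h : ℝ → ℝ} {K v : ℝ}

lemma nonneg_of_abs_le_mul_abs (hK : ∀ s, |h s| ≤ K * |s|) : 0 ≤ K := by
  simpa using (abs_nonneg _).trans (hK 1)

lemma pi_sq_mul_div_le_pi_div_two (hK0 : 0 ≤ K) (hv : 2 * π * (K + 1) ≤ v) :
    π ^ 2 * (K + 1) / v ≤ π / 2 := by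
  have hπ := pi_pos
  rw [div_le_iff₀ (lt_of_lt_of_le (by positivity) hv)]
  nlinarith

lemma lt_mul_sin_of_le_pi_sub (hK : ∀ s, |h s| ≤ K * |s|) (hv : 0 < v) {s : ℝ} (hs : 0 < s)
    (hsπ : s ≤ π - π ^ 2 * (K + 1) / v) : h s < v * sin s := by
  have hK0 := nonneg_of_abs_le_mul_abs hK
  have hsin := two_mul_div_pi_sq_mul_le_sin hs.le (by positivity) hsπ
  have hcoef : 2 * (π ^ 2 * (K + 1) / v) / π ^ 2 = 2 * (K + 1) / v := by
    field_simp
  rw [hcoef, div_mul_eq_mul_div, div_le_iff₀ hv] at hsin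
  have hhs := hK s
  rw [abs_of_pos hs] at hhs
  calc h s ≤ K * s := (le_abs_self _).trans hhs
    _ < 2 * (K + 1) * s := by nlinarith
    _ ≤ v * sin s := by linarith

lemma mul_sin_pi_add_lt (hK : ∀ s, |h s| ≤ K * |s|) (hv : 2 * π * (K + 1) ≤ v) :
    v * sin (π + π ^ 2 * (K + 1) / v) < h (π + π ^ 2 * (K + 1) / v) := by
  have hK0 := nonneg_of_abs_le_mul_abs hK
  have hπ := pi_pos
  have hv0 : 0 < v := lt_of_lt_of_le (by positivity) hv
  set δ := π ^ 2 * (K + 1) / v with hδ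
  have hδ0 : 0 < δ := by positivity
  have hδπ : δ ≤ π / 2 := pi_sq_mul_div_le_pi_div_two hK0 hv
  have hvδ : v * (2 / π * δ) = 2 * π * (K + 1) := by
    rw [hδ]; field_simp
  have hsin : v * (2 / π * δ) ≤ v * sin δ := by gcongr; exact mul_le_sin hδ0.le hδπ
  have hh : -(K * (π + δ)) ≤ h (π + δ) := by
    have := hK (π + δ)
    rw [abs_of_pos (by positivity : 0 < π + δ)] at this
    exact neg_le_of_abs_le this
  have hKδ : K * δ ≤ K * (π / 2) := mul_le_mul_of_nonneg_left hδπ hK0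
  rw [show sin (π + δ) = -sin δ by rw [add_comm, sin_add_pi]]
  nlinarith

/-- The solution set coincides with its closed part in `[π - δ, ∞)`, so its infimum is attained. -/
lemma isLeast_firstPosSolution (hc : Continuous h) (hK : ∀ s, |h s| ≤ K * |s|)
    (hv : 2 * π * (K + 1) ≤ v) :
    IsLeast {s | 0 < s ∧ v * sin s = h s} (firstPosSolution h v) ∧
      firstPosSolution h v ∈ Set.Icc (π - π ^ 2 * (K + 1) / v) (π + π ^ 2 * (K + 1) / v) := by
  have hK0 := nonneg_of_abs_le_mul_abs hK
  have hπ := pi_pos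
  have hv0 : 0 < v := lt_of_lt_of_le (by positivity) hv
  set δ := π ^ 2 * (K + 1) / v
  have hδ0 : 0 < δ := by positivity
  have hδπ : δ ≤ π / 2 := pi_sq_mul_div_le_pi_div_two hK0 hv
  have hbelow : ∀ s, 0 < s → s ≤ π - δ → h s < v * sin s := fun s hs hsπ =>
    lt_mul_sin_of_le_pi_sub hK hv0 hs hsπ
  obtain ⟨r, hr, hr0⟩ : ∃ r ∈ Set.Icc (π - δ) (π + δ), v * sin r - h r = 0 :=
    intermediate_value_Icc' (by linarith) (by fun_prop)
      ⟨by linarith [mul_sin_pi_add_lt hK hv], by linarith [hbelow (π - δ) (by linarith) le_rfl]⟩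
  have hset : {s | 0 < s ∧ v * sin s = h s} = {s | v * sin s = h s} ∩ Set.Ici (π - δ) := by
    ext s
    refine ⟨fun ⟨hs, hroot⟩ => ⟨hroot, Set.mem_Ici.2 (le_of_not_gt fun hsπ => ?_)⟩,
      fun ⟨hroot, hs⟩ => ⟨by linarith [Set.mem_Ici.1 hs], hroot⟩⟩
    exact (hbelow s hs hsπ.le).ne' hroot
  have hclosed : IsClosed ({s | v * sin s = h s} ∩ Set.Ici (π - δ)) :=
    (isClosed_eq (by fun_prop) hc).inter isClosed_Ici
  have hleast := hclosed.isLeast_csInf ⟨r, sub_eq_zero.1 hr0, hr.1⟩ ⟨π - δ, fun s hs => hs.2⟩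
  have hlow : π - δ ≤ sInf ({s | v * sin s = h s} ∩ Set.Ici (π - δ)) := hleast.1.2
  rw [← hset] at hleast hlow
  have hrS : r ∈ {s | 0 < s ∧ v * sin s = h s} := ⟨by linarith [hr.1], sub_eq_zero.1 hr0⟩
  exact ⟨hleast, hlow, (hleast.2 hrS).trans hr.2⟩

lemma tendsto_firstPosSolution (hc : Continuous h) (hK : ∀ s, |h s| ≤ K * |s|) :
    Tendsto (firstPosSolution h) atTop (𝓝 π) := by
  have hδ : Tendsto (fun v => π ^ 2 * (K + 1) / v) atTop (𝓝 0) :=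
    tendsto_const_nhds.div_atTop tendsto_id
  have hbounds := (eventually_ge_atTop (2 * π * (K + 1))).mono fun v hv =>
    (isLeast_firstPosSolution hc hK hv).2
  exact tendsto_of_tendsto_of_tendsto_of_le_of_le' (by simpa using tendsto_const_nhds.sub hδ)
    (by simpa using tendsto_const_nhds.add hδ) (hbounds.mono fun v hv => hv.1)
    (hbounds.mono fun v hv => hv.2)

lemma tendsto_mul_firstPosSolution_sub_pi (hc : Continuous h) (hK : ∀ s, |h s| ≤ K * |s|) :
    Tendsto (fun v => v * (firstPosSolution h v - π)) atTop (𝓝 (-h π)) := by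
  have hK0 := nonneg_of_abs_le_mul_abs hK
  set C := π ^ 2 * (K + 1)
  set u := fun v => firstPosSolution h v - π with hu
  have hu0 : Tendsto u atTop (𝓝 0) := by
    simpa using (tendsto_firstPosSolution hc hK).sub_const π
  have hroot : ∀ᶠ v in atTop, 0 < v ∧ |u v| ≤ C / v ∧ v * sin (u v) = -h (π + u v) := by
    filter_upwards [eventually_ge_atTop (2 * π * (K + 1))] with v hv
    obtain ⟨⟨⟨-, hsol⟩, -⟩, hlo, hhi⟩ := isLeast_firstPosSolution hc hK hv
    have hπu : π + u v = firstPosSolution h v := by simp [hu]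
    refine ⟨lt_of_lt_of_le (by positivity) hv, abs_le.2 ⟨by linarith, by linarith⟩, ?_⟩
    rw [hπu, ← hsol, ← hπu, add_comm, sin_add_pi, mul_neg, neg_neg]
  have hsin : Tendsto (fun v => v * sin (u v)) atTop (𝓝 (-h π)) := by
    have hπu : Tendsto (fun v => π + u v) atTop (𝓝 π) := by
      simpa using tendsto_const_nhds.add hu0
    exact ((hc.tendsto π).comp hπu).neg.congr' (hroot.mono fun v hv => hv.2.2.symm)
  have herr : Tendsto (fun v => v * (u v - sin (u v))) atTop (𝓝 0) := by
    refine squeeze_zero_norm' (hroot.mono fun v hv => ?_)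
      (tendsto_const_nhds.div_atTop (tendsto_pow_atTop two_ne_zero) :
        Tendsto (fun v => C ^ 3 / 6 / v ^ 2) atTop (𝓝 0))
    calc ‖v * (u v - sin (u v))‖ = v * |u v - sin (u v)| := by
          rw [Real.norm_eq_abs, abs_mul, abs_of_pos hv.1]
      _ ≤ v * (|u v| ^ 3 / 6) := by gcongr; exacts [hv.1.le, abs_sub_sin_le _]
      _ ≤ v * ((C / v) ^ 3 / 6) := by gcongr; exacts [hv.1.le, hv.2.1]
      _ = C ^ 3 / 6 / v ^ 2 := by field_simp
  simpa using (hsin.add herr).congr fun v => by ring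

end FirstPosSolution

/-- With `s = t - t₀`, `x v (t₀ + s) - σ = impactResidual ω σ γ t₀ s - v * sin s`. -/
noncomputable def impactResidual (ω σ γ t₀ s : ℝ) : ℝ :=
  (σ - γ * cos (ω * t₀)) * (cos s - 1) + ω * γ * sin (ω * t₀) * sin s +
    γ * (cos (ω * (t₀ + s)) - cos (ω * t₀))

section ImpactResidual

variable (ω σ γ t₀ : ℝ)

lemma continuous_impactResidual : Continuous (impactResidual ω σ γ t₀) := by
  unfold impactResidual
  fun_prop

lemma abs_impactResidual_le (s : ℝ) :
    |impactResidual ω σ γ t₀ s| ≤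
      (|σ - γ * cos (ω * t₀)| + |ω * γ * sin (ω * t₀)| + |γ * ω|) * |s| := by
  have hcos : |cos s - 1| ≤ |s| := by simpa using abs_cos_sub_cos_le s 0
  have hsin : |sin s| ≤ |s| := by simpa using abs_sin_sub_sin_le s 0
  have hforce : |cos (ω * (t₀ + s)) - cos (ω * t₀)| ≤ |ω| * |s| := by
    simpa [← mul_sub, abs_mul] using abs_cos_sub_cos_le (ω * (t₀ + s)) (ω * t₀)
  unfold impactResidual
  calc _ ≤ |σ - γ * cos (ω * t₀)| * |cos s - 1| + |ω * γ * sin (ω * t₀)| * |sin s| +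
        |γ| * |cos (ω * (t₀ + s)) - cos (ω * t₀)| := by
        refine (abs_add_three _ _ _).trans (le_of_eq ?_)
        rw [abs_mul (σ - _), abs_mul (ω * γ * _), abs_mul γ]
    _ ≤ |σ - γ * cos (ω * t₀)| * |s| + |ω * γ * sin (ω * t₀)| * |s| + |γ| * (|ω| * |s|) := by
        gcongr
    _ = _ := by rw [abs_mul γ ω]; ring

lemma neg_impactResidual_pi :
    -impactResidual ω σ γ t₀ π = 2 * σ - γ * (cos (ω * t₀) + cos (ω * (t₀ + π))) := by
  simp only [impactResidual, cos_pi, sin_pi]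
  ring

end ImpactResidual

theorem impact_oscillator_flight_time_asymptotics_general
    (ω σ γ t₀ : ℝ)
    (x : ℝ → ℝ → ℝ)
    (hx : ∀ v₀ t, x v₀ t = (σ - γ * Real.cos (ω * t₀)) * Real.cos (t - t₀) +
      (-v₀ + ω * γ * Real.sin (ω * t₀)) * Real.sin (t - t₀) + γ * Real.cos (ω * t))
    (t₁ : ℝ → ℝ)
    (ht₁ : ∀ v₀, t₁ v₀ = sInf {t : ℝ | t₀ < t ∧ x v₀ t = σ})
    (g : ℝ → ℝ)
    (hg : ∀ t, g t = 2 * σ - γ * (Real.cos (ω * t) + Real.cos (ω * (t + π)))) :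
    (∃ V : ℝ, ∀ v₀ ≥ V, t₀ < t₁ v₀ ∧ t₁ v₀ < t₀ + 2 * π ∧ x v₀ (t₁ v₀) = σ) ∧
    Filter.Tendsto (fun v₀ => t₁ v₀ - t₀) Filter.atTop (nhds π) ∧
    Filter.Tendsto (fun v₀ => v₀ * (t₁ v₀ - t₀ - π)) Filter.atTop (nhds (g t₀)) := by
  set h := impactResidual ω σ γ t₀
  have hc := continuous_impactResidual ω σ γ t₀
  have hK := abs_impactResidual_le ω σ γ t₀
  set K := |σ - γ * cos (ω * t₀)| + |ω * γ * sin (ω * t₀)| + |γ * ω|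
  have hK0 : 0 ≤ K := by positivity
  have hx_eq (v s : ℝ) : x v (t₀ + s) = σ ↔ v * sin s = h s := by
    rw [hx, add_sub_cancel_left]
    simp only [h, impactResidual]
    constructor <;> intro H <;> linarith
  have ht₁_eq (v : ℝ) (hv : 2 * π * (K + 1) ≤ v) : t₁ v = t₀ + firstPosSolution h v := by
    obtain ⟨⟨⟨hpos, hsol⟩, hleast⟩, -⟩ := isLeast_firstPosSolution hc hK hv
    refine (ht₁ v).trans (IsLeast.csInf_eq ⟨⟨by linarith, (hx_eq v _).2 hsol⟩, fun t ht => ?_⟩)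
    have := hleast ⟨sub_pos.2 ht.1, (hx_eq v (t - t₀)).1 (by rw [add_sub_cancel]; exact ht.2)⟩
    linarith
  have hflight : ∀ᶠ v in atTop, firstPosSolution h v = t₁ v - t₀ :=
    (eventually_ge_atTop _).mono fun v hv => by rw [ht₁_eq v hv]; ring
  refine ⟨⟨2 * π * (K + 1), fun v hv => ?_⟩, ?_, ?_⟩
  · obtain ⟨⟨⟨hpos, hsol⟩, -⟩, -, hhi⟩ := isLeast_firstPosSolution hc hK hv
    have hδ := pi_sq_mul_div_le_pi_div_two hK0 hv
    rw [ht₁_eq v hv, hx_eq]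
    exact ⟨by linarith, by linarith [pi_pos], hsol⟩
  · exact (tendsto_firstPosSolution hc hK).congr' hflight
  · rw [hg, ← neg_impactResidual_pi]
    refine (tendsto_mul_firstPosSolution_sub_pi hc hK).congr' (hflight.mono fun v hv => ?_)
    rw [hv]

/-- High-velocity asymptotics of the impact time: for large incoming velocity `v₀`
the next impact time `t₁(v₀)` is attained in `(t₀, t₀ + 2π)`, the time of flight
`t₁(v₀) - t₀` tends to `π`, and `v₀ (t₁(v₀) - t₀ - π) → g(t₀)` where
`g(t) = 2σ - γ (cos (ωt) + cos (ω(t + π)))`. -/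
theorem impact_oscillator_flight_time_asymptotics
    (ω σ γ t₀ : ℝ) (hω : 0 < ω) (hω1 : ω ≠ 1) (hγ : γ = 1 / (1 - ω ^ 2))
    (x : ℝ → ℝ → ℝ)
    (hx : ∀ v₀ t, x v₀ t = (σ - γ * Real.cos (ω * t₀)) * Real.cos (t - t₀) +
      (-v₀ + ω * γ * Real.sin (ω * t₀)) * Real.sin (t - t₀) + γ * Real.cos (ω * t))
    (t₁ : ℝ → ℝ)
    (ht₁ : ∀ v₀, t₁ v₀ = sInf {t : ℝ | t₀ < t ∧ x v₀ t = σ})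
    (g : ℝ → ℝ)
    (hg : ∀ t, g t = 2 * σ - γ * (Real.cos (ω * t) + Real.cos (ω * (t + π)))) :
    (∃ V : ℝ, ∀ v₀ ≥ V, t₀ < t₁ v₀ ∧ t₁ v₀ < t₀ + 2 * π ∧ x v₀ (t₁ v₀) = σ) ∧
    Filter.Tendsto (fun v₀ => t₁ v₀ - t₀) Filter.atTop (nhds π) ∧
    Filter.Tendsto (fun v₀ => v₀ * (t₁ v₀ - t₀ - π)) Filter.atTop (nhds (g t₀)) :=
  impact_oscillator_flight_time_asymptotics_general ω σ γ t₀ x hx t₁ ht₁ g hg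
end

section
/- Let ω > 0 with ω ≠ 1, γ = 1/(1−ω²), σ ∈ ℝ, and fix t₀ ∈ ℝ. For v₀ > 0 let t₁(v₀) be the time of the next impact (the first t > t₀ with x(t; t₀, v₀) = σ) and let v₁(v₀) = x'(t₁(v₀); t₀, v₀) be the incoming velocity at that impact, where x(t; t₀, v₀) = (σ − γ·cos(ωt₀))·cos(t−t₀) + (−v₀ + ωγ·sin(ωt₀))·sin(t−t₀) + γ·cos(ωt). Then as v₀ → ∞, v₁(v₀) − v₀ → f(t₀), where f(t) = −ωγ·(sin(ωt) + sin(ω(t+π))). In particular the velocity change per impact is bounded at high velocities. -/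
open Real

open Filter Set Topology

/-!
Write the flight after the impact as `x v t = -v sin (t - t₀) + g t`, where `g` does not depend
on `v`, `g t₀ = σ` and `|g t - σ| ≤ L |t - t₀|`. For large `v` the term `-v sin` dominates: the
orbit stays below `σ` on `(t₀, t₀ + π/2]` and is above it at `t₀ + 3π/2`, so the next impact `T`
lies in between, and the impact equation `v sin (T - t₀ - π) = σ - g T` forces
`T = t₀ + π + O(1/v)`. Hence `x'(T) - v = v (cos (T - t₀ - π) - 1) + g'(T) = O(1/v) + g'(T)`,
which tends to `g'(t₀ + π) = f t₀`.
-/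

lemma abs_le_pi_div_two_mul_abs_sin {s : ℝ} (hs : |s| ≤ π / 2) : |s| ≤ π / 2 * |sin s| := by
  have hjordan : 2 / π * |s| ≤ sin |s| := mul_le_sin (abs_nonneg s) hs
  rw [abs_sin_eq_sin_abs_of_abs_le_pi (by linarith [pi_pos])]
  calc |s| = π / 2 * (2 / π * |s|) := by field_simp
    _ ≤ π / 2 * sin |s| := by gcongr

lemma abs_mul_cos_sub_one_le {v ε C : ℝ} (hv : 0 < v) (hε : v * |ε| ≤ C) :
    |v * (cos ε - 1)| ≤ C ^ 2 / 2 / v := by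
  have hcos : |cos ε - 1| ≤ ε ^ 2 / 2 := by
    rw [abs_of_nonpos (by linarith [cos_le_one ε])]
    linarith [one_sub_sq_div_two_le_cos (x := ε)]
  rw [abs_mul, abs_of_pos hv, le_div_iff₀ hv]
  calc v * |cos ε - 1| * v ≤ v * (ε ^ 2 / 2) * v := by gcongr
    _ = (v * |ε|) ^ 2 / 2 := by rw [mul_pow, sq_abs]; ring
    _ ≤ C ^ 2 / 2 := by gcongr

namespace ImpactOscillator

section Flight

variable {x g : ℝ → ℝ} {t₀ σ L v : ℝ}

lemma nonneg_of_forall_abs_sub_le (hg : ∀ t, |g t - σ| ≤ L * |t - t₀|) : 0 ≤ L := by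
  simpa using (abs_nonneg _).trans (hg (t₀ + 1))

lemma lt_of_mem_Ioc (hx : ∀ t, x t = -v * sin (t - t₀) + g t)
    (hg : ∀ t, |g t - σ| ≤ L * |t - t₀|) (hv : π / 2 * L < v)
    {t : ℝ} (ht : t ∈ Ioc t₀ (t₀ + π / 2)) : x t < σ := by
  have hs : 0 < t - t₀ := sub_pos.2 ht.1
  have hgt : g t - σ ≤ L * (t - t₀) := by
    simpa [abs_of_pos hs] using (le_abs_self _).trans (hg t)
  have hL := nonneg_of_forall_abs_sub_le hg
  have hjordan : 2 / π * (t - t₀) ≤ sin (t - t₀) := mul_le_sin hs.le (by linarith [ht.2])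
  have hv₀ : 0 ≤ v := by nlinarith [pi_pos]
  have hLv : L < 2 / π * v := by
    rw [div_mul_eq_mul_div, lt_div_iff₀ pi_pos]
    linarith
  rw [hx]
  nlinarith [mul_le_mul_of_nonneg_left hjordan hv₀]

lemma lt_apply_add_three_pi_div_two (hx : ∀ t, x t = -v * sin (t - t₀) + g t)
    (hg : ∀ t, |g t - σ| ≤ L * |t - t₀|) (hv : 3 * π / 2 * L < v) :
    σ < x (t₀ + 3 * π / 2) := by
  have hsin : sin (t₀ + 3 * π / 2 - t₀) = -1 := by
    rw [show t₀ + 3 * π / 2 - t₀ = π / 2 + π by ring, sin_add_pi, sin_pi_div_two]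
  have hgt : -(L * (3 * π / 2)) ≤ g (t₀ + 3 * π / 2) - σ := by
    have h := hg (t₀ + 3 * π / 2)
    rw [add_sub_cancel_left, abs_of_pos (show (0 : ℝ) < 3 * π / 2 by positivity)] at h
    exact neg_le_of_abs_le h
  rw [hx, hsin]
  linarith

lemma sInf_mem_Icc_and_apply_eq (hx : ∀ t, x t = -v * sin (t - t₀) + g t) (hgc : Continuous g)
    (hg : ∀ t, |g t - σ| ≤ L * |t - t₀|) (hv : 3 * π / 2 * L < v) :
    sInf {t | t₀ < t ∧ x t = σ} ∈ Icc (t₀ + π / 2) (t₀ + 3 * π / 2) ∧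
      x (sInf {t | t₀ < t ∧ x t = σ}) = σ := by
  have hxc : Continuous x := by rw [funext hx]; fun_prop
  have hv' : π / 2 * L < v := by nlinarith [pi_pos, nonneg_of_forall_abs_sub_le hg]
  obtain ⟨t', ht', hxt'⟩ := intermediate_value_Icc (by linarith [pi_pos]) hxc.continuousOn
    ⟨(lt_of_mem_Ioc hx hg hv' ⟨by linarith [pi_pos], le_rfl⟩).le,
      (lt_apply_add_three_pi_div_two hx hg hv).le⟩
  have hS : {t | t₀ < t ∧ x t = σ} = Ici (t₀ + π / 2) ∩ x ⁻¹' {σ} := by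
    ext u
    refine ⟨fun ⟨hu, hxu⟩ => ⟨?_, hxu⟩, fun ⟨hu, hxu⟩ => ⟨by linarith [pi_pos, mem_Ici.1 hu], hxu⟩⟩
    exact le_of_not_gt fun h => (lt_of_mem_Ioc hx hg hv' ⟨hu, h.le⟩).ne hxu
  have hbdd : BddBelow (Ici (t₀ + π / 2) ∩ x ⁻¹' {σ}) := ⟨t₀ + π / 2, fun u hu => hu.1⟩
  have hmem := (isClosed_Ici.inter (isClosed_singleton.preimage hxc)).csInf_mem
    ⟨t', ht'.1, hxt'⟩ hbdd
  rw [hS]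
  exact ⟨⟨hmem.1, (csInf_le hbdd ⟨ht'.1, hxt'⟩).trans ht'.2⟩, hmem.2⟩

lemma mul_abs_sub_pi_le (hx : ∀ t, x t = -v * sin (t - t₀) + g t)
    (hg : ∀ t, |g t - σ| ≤ L * |t - t₀|) (hv : 0 < v) {T : ℝ}
    (hT : T ∈ Icc (t₀ + π / 2) (t₀ + 3 * π / 2)) (hxT : x T = σ) :
    v * |T - (t₀ + π)| ≤ 3 * π ^ 2 / 4 * L := by
  have hε : |T - (t₀ + π)| ≤ π / 2 := abs_le.2 ⟨by linarith [hT.1], by linarith [hT.2]⟩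
  have hsin : v * sin (T - (t₀ + π)) = σ - g T := by
    rw [hx, show T - t₀ = T - (t₀ + π) + π by ring, sin_add_pi] at hxT
    linarith
  have hgT : |σ - g T| ≤ L * (3 * π / 2) := by
    rw [abs_sub_comm]
    refine (hg T).trans (mul_le_mul_of_nonneg_left ?_ (nonneg_of_forall_abs_sub_le hg))
    rw [abs_of_nonneg (by linarith [hT.1, pi_pos])]
    linarith [hT.2]
  calc v * |T - (t₀ + π)| ≤ v * (π / 2 * |sin (T - (t₀ + π))|) :=
        mul_le_mul_of_nonneg_left (abs_le_pi_div_two_mul_abs_sin hε) hv.le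
    _ = π / 2 * |σ - g T| := by rw [← hsin, abs_mul, abs_of_pos hv]; ring
    _ ≤ π / 2 * (L * (3 * π / 2)) := by gcongr
    _ = 3 * π ^ 2 / 4 * L := by ring

theorem tendsto_velocity_sInf_sub {x xd : ℝ → ℝ → ℝ} {g' : ℝ → ℝ}
    (hx : ∀ v t, x v t = -v * sin (t - t₀) + g t)
    (hxd : ∀ v t, xd v t = -v * cos (t - t₀) + g' t)
    (hgc : Continuous g) (hg : ∀ t, |g t - σ| ≤ L * |t - t₀|) (hg' : ContinuousAt g' (t₀ + π)) :
    Tendsto (fun v => xd v (sInf {t | t₀ < t ∧ x v t = σ}) - v) atTop (𝓝 (g' (t₀ + π))) := by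
  set T : ℝ → ℝ := fun v => sInf {t | t₀ < t ∧ x v t = σ}
  set C := 3 * π ^ 2 / 4 * L
  have hTv : ∀ᶠ v in atTop, 0 < v ∧ v * |T v - (t₀ + π)| ≤ C := by
    filter_upwards [eventually_gt_atTop (max 0 (3 * π / 2 * L))] with v hv
    have hv₀ : 0 < v := (le_max_left _ _).trans_lt hv
    obtain ⟨hT, hxT⟩ := sInf_mem_Icc_and_apply_eq (hx v) hgc hg ((le_max_right _ _).trans_lt hv)
    exact ⟨hv₀, mul_abs_sub_pi_le (hx v) hg hv₀ hT hxT⟩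
  have hT : Tendsto T atTop (𝓝 (t₀ + π)) := by
    rw [tendsto_iff_norm_sub_tendsto_zero]
    refine squeeze_zero' (.of_forall fun _ => norm_nonneg _) ?_
      ((tendsto_const_nhds (x := C)).div_atTop tendsto_id)
    filter_upwards [hTv] with v ⟨hv, hle⟩
    rw [norm_eq_abs, id, le_div_iff₀ hv, mul_comm]
    exact hle
  have hcos : Tendsto (fun v => v * (cos (T v - (t₀ + π)) - 1)) atTop (𝓝 0) := by
    refine squeeze_zero_norm' ?_ ((tendsto_const_nhds (x := C ^ 2 / 2)).div_atTop tendsto_id)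
    filter_upwards [hTv] with v ⟨hv, hle⟩
    exact abs_mul_cos_sub_one_le hv hle
  refine ((hcos.add (hg'.tendsto.comp hT)).congr fun v => ?_).trans (by rw [zero_add])
  rw [Function.comp_apply, hxd, show T v - t₀ = T v - (t₀ + π) + π by ring, cos_add_pi]
  ring

end Flight

lemma hasDerivAt_forcedResponse (A D γ ω t₀ t : ℝ) :
    HasDerivAt (fun t => A * cos (t - t₀) + D * sin (t - t₀) + γ * cos (ω * t))
      (-A * sin (t - t₀) + D * cos (t - t₀) - ω * γ * sin (ω * t)) t := by
  have hs := (hasDerivAt_id' t).sub_const t₀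
  have hω := (hasDerivAt_id' t).const_mul ω
  refine (((hs.cos.const_mul A).add (hs.sin.const_mul D)).add (hω.cos.const_mul γ)).congr_deriv ?_
  ring

lemma abs_forcedResponse_deriv_le (A D γ ω t₀ t : ℝ) :
    |-A * sin (t - t₀) + D * cos (t - t₀) - ω * γ * sin (ω * t)| ≤ |A| + |D| + |ω * γ| := by
  have h1 : |A * sin (t - t₀)| ≤ |A| := by
    rw [abs_mul]; exact mul_le_of_le_one_right (abs_nonneg _) (abs_sin_le_one _)
  have h2 : |D * cos (t - t₀)| ≤ |D| := by
    rw [abs_mul]; exact mul_le_of_le_one_right (abs_nonneg _) (abs_cos_le_one _)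
  have h3 : |ω * γ * sin (ω * t)| ≤ |ω * γ| := by
    rw [abs_mul]; exact mul_le_of_le_one_right (abs_nonneg _) (abs_sin_le_one _)
  calc _ ≤ |-A * sin (t - t₀) + D * cos (t - t₀)| + |ω * γ * sin (ω * t)| := abs_sub _ _
    _ ≤ |A * sin (t - t₀)| + |D * cos (t - t₀)| + |ω * γ * sin (ω * t)| := by
        gcongr; simpa [neg_mul, abs_neg] using abs_add_le (-A * sin (t - t₀)) (D * cos (t - t₀))
    _ ≤ _ := by gcongr

end ImpactOscillator

theorem impact_oscillator_velocity_change_asymptotics_general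
    (ω σ γ t₀ : ℝ)
    (x xd : ℝ → ℝ → ℝ)
    (hx : ∀ v₀ t, x v₀ t = (σ - γ * Real.cos (ω * t₀)) * Real.cos (t - t₀) +
      (-v₀ + ω * γ * Real.sin (ω * t₀)) * Real.sin (t - t₀) + γ * Real.cos (ω * t))
    (hxd : ∀ v₀ t, HasDerivAt (x v₀) (xd v₀ t) t)
    (t₁ : ℝ → ℝ)
    (ht₁ : ∀ v₀, t₁ v₀ = sInf {t : ℝ | t₀ < t ∧ x v₀ t = σ})
    (f : ℝ → ℝ)
    (hf : ∀ t, f t = -(ω * γ) * (Real.sin (ω * t) + Real.sin (ω * (t + π)))) :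
    Filter.Tendsto (fun v₀ => xd v₀ (t₁ v₀) - v₀) Filter.atTop (nhds (f t₀)) := by
  set A := σ - γ * cos (ω * t₀)
  set D := ω * γ * sin (ω * t₀)
  set g := fun t => A * cos (t - t₀) + D * sin (t - t₀) + γ * cos (ω * t)
  set g' := fun t => -A * sin (t - t₀) + D * cos (t - t₀) - ω * γ * sin (ω * t)
  have hxg : ∀ v t, x v t = -v * sin (t - t₀) + g t := fun v t => by rw [hx]; ring
  have hxdg : ∀ v t, xd v t = -v * cos (t - t₀) + g' t := fun v t => by
    refine (hxd v t).unique ?_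
    rw [funext (hxg v)]
    refine ((((hasDerivAt_id' t).sub_const t₀).sin.const_mul (-v)).add
      (ImpactOscillator.hasDerivAt_forcedResponse A D γ ω t₀ t)).congr_deriv ?_
    ring
  have hgσ : ∀ t, |g t - σ| ≤ (|A| + |D| + |ω * γ|) * |t - t₀| := fun t => by
    have hgt₀ : g t₀ = σ := by simp [g, A]
    rw [← hgt₀]
    exact convex_univ.norm_image_sub_le_of_norm_hasDerivWithin_le
      (fun t _ => (ImpactOscillator.hasDerivAt_forcedResponse A D γ ω t₀ t).hasDerivWithinAt)
      (fun t _ => ImpactOscillator.abs_forcedResponse_deriv_le A D γ ω t₀ t)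
      (mem_univ _) (mem_univ _)
  have hg'f : g' (t₀ + π) = f t₀ := by
    simp only [g', D, hf, add_sub_cancel_left, sin_pi, cos_pi]
    ring
  simp_rw [ht₁, ← hg'f]
  exact ImpactOscillator.tendsto_velocity_sInf_sub hxg hxdg (by fun_prop) hgσ (by fun_prop)

/-- High-velocity asymptotics of the velocity change at an impact: if `t₁(v₀)` is
the next impact time and `v₁(v₀) = x'(t₁(v₀))` the incoming velocity there, then
`v₁(v₀) - v₀ → f(t₀)` as `v₀ → ∞`, where
`f(t) = -ωγ (sin (ωt) + sin (ω(t + π)))`. -/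
theorem impact_oscillator_velocity_change_asymptotics
    (ω σ γ t₀ : ℝ) (hω : 0 < ω) (hω1 : ω ≠ 1) (hγ : γ = 1 / (1 - ω ^ 2))
    (x xd : ℝ → ℝ → ℝ)
    (hx : ∀ v₀ t, x v₀ t = (σ - γ * Real.cos (ω * t₀)) * Real.cos (t - t₀) +
      (-v₀ + ω * γ * Real.sin (ω * t₀)) * Real.sin (t - t₀) + γ * Real.cos (ω * t))
    (hxd : ∀ v₀ t, HasDerivAt (x v₀) (xd v₀ t) t)
    (t₁ : ℝ → ℝ)
    (ht₁ : ∀ v₀, t₁ v₀ = sInf {t : ℝ | t₀ < t ∧ x v₀ t = σ})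
    (f : ℝ → ℝ)
    (hf : ∀ t, f t = -(ω * γ) * (Real.sin (ω * t) + Real.sin (ω * (t + π)))) :
    Filter.Tendsto (fun v₀ => xd v₀ (t₁ v₀) - v₀) Filter.atTop (nhds (f t₀)) :=
  impact_oscillator_velocity_change_asymptotics_general ω σ γ t₀ x xd hx hxd t₁ ht₁ f hf
end

section
/- Let ω = 1, fix σ ∈ ℝ and t₀ ∈ ℝ. For v₀ > 0 let t₁(v₀) = inf{ t > t₀ : x(t) = σ } be the time of the next impact and v₁(v₀) = x'(t₁(v₀)) the incoming velocity there, for the resonant motion x(t) = σ·cos(t−t₀) − (v₀ + (1/2)·sin(t₀))·sin(t−t₀) + (1/2)·(t−t₀)·sin(t). Then as v₀ → ∞: t₁(v₀) − t₀ → π, v₁(v₀) − v₀ → −(π/2)·cos(t₀), and v₀·(t₁(v₀) − t₀ − π) → 2σ + (π/2)·sin(t₀). -/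
/-!
Write `A = v₀ + sin t₀ / 2` and `s = t - t₀`. The motion is `σ - A sin s + r(s)` with
`|r(s)| ≤ (|σ| + 1) s`, so for large `A` the term `-A sin s` keeps it below `σ` on
`(0, π - δ]` and above `σ` at `s = π + δ`; hence `E = t₁ - t₀ - π → 0`. The impact condition
at `s = π + E` reads `A sin E = σ (1 + cos E) + (π + E)/2 · sin (t₀ + E)`, whose right side
tends to `2σ + (π/2) sin t₀`. As `sin E ~ E` and `1 - cos E = sin² E / (1 + cos E)`, this gives
`A E → 2σ + (π/2) sin t₀` and `A (1 - cos E) → 0`, from which all three limits follow.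
-/

open Real Filter Topology Set

theorem Real.sinc_mul_self (x : ℝ) : sinc x * x = sin x := by
  rcases eq_or_ne x 0 with rfl | hx
  · simp
  · rw [sinc_of_ne_zero hx, div_mul_cancel₀ _ hx]

theorem mul_le_sin_of_le_pi_sub {s δ : ℝ} (hs : 0 ≤ s) (hδ : 0 ≤ δ) (hsδ : s ≤ π - δ) :
    2 * δ * s / π ^ 2 ≤ sin s := by
  have hπ := pi_pos
  rw [div_le_iff₀ (by positivity)]
  rcases le_total s (π / 2) with h | h
  · have := mul_le_sin hs h
    rw [div_mul_eq_mul_div, div_le_iff₀ hπ] at this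
    nlinarith
  · have := mul_le_sin (x := π - s) (by linarith) (by linarith)
    rw [sin_pi_sub, div_mul_eq_mul_div, div_le_iff₀ hπ] at this
    nlinarith

theorem Filter.Tendsto.mul_of_mul_sin {α : Type*} {l : Filter α} {a e : α → ℝ} {L : ℝ}
    (he : Tendsto e l (𝓝 0)) (h : Tendsto (fun i => a i * sin (e i)) l (𝓝 L)) :
    Tendsto (fun i => a i * e i) l (𝓝 L) := by
  have hsinc : Tendsto (fun i => sinc (e i)) l (𝓝 1) :=
    (continuous_sinc.tendsto' 0 1 sinc_zero).comp he
  have := h.div hsinc one_ne_zero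
  rw [div_one] at this
  refine this.congr' ?_
  filter_upwards [hsinc.eventually_ne one_ne_zero] with i hi
  rw [Pi.div_apply, ← sinc_mul_self, mul_left_comm, mul_div_cancel_left₀ _ hi]

theorem Filter.Tendsto.mul_one_sub_cos_of_mul_sin {α : Type*} {l : Filter α} {a e : α → ℝ}
    {L : ℝ} (he : Tendsto e l (𝓝 0)) (h : Tendsto (fun i => a i * sin (e i)) l (𝓝 L)) :
    Tendsto (fun i => a i * (1 - cos (e i))) l (𝓝 0) := by
  have hcos : Tendsto (fun i => 1 + cos (e i)) l (𝓝 2) :=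
    ((continuous_const.add continuous_cos).tendsto' 0 2 (by norm_num)).comp he
  have hsin : Tendsto (fun i => sin (e i)) l (𝓝 0) :=
    (continuous_sin.tendsto' 0 0 sin_zero).comp he
  have := (h.mul hsin).div hcos two_ne_zero
  rw [mul_zero, zero_div] at this
  refine this.congr' ?_
  filter_upwards [hcos.eventually_ne two_ne_zero] with i hi
  rw [Pi.div_apply, div_eq_iff hi, mul_assoc, mul_assoc, ← sq, sin_sq]
  ring

theorem sInf_preimage_mem_Icc {f : ℝ → ℝ} {a b c y : ℝ} (hf : Continuous f) (hab : a < b)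
    (hbc : b ≤ c) (hbefore : ∀ t ∈ Ioo a b, f t ≠ y) (hb : f b ≤ y) (hc : y ≤ f c) :
    sInf {t | a < t ∧ f t = y} ∈ Icc b c ∧ f (sInf {t | a < t ∧ f t = y}) = y := by
  set S := {t | a < t ∧ f t = y}
  obtain ⟨t', ht', hft'⟩ := intermediate_value_Icc hbc hf.continuousOn ⟨hb, hc⟩
  have hmem : t' ∈ S := ⟨hab.trans_le ht'.1, hft'⟩
  have hbdd : BddBelow S := ⟨a, fun t ht => ht.1.le⟩
  have hS_closure : closure S ⊆ f ⁻¹' {y} :=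
    (isClosed_singleton.preimage hf).closure_subset_iff.2 fun t ht => ht.2
  refine ⟨⟨le_csInf ⟨t', hmem⟩ fun t ht => ?_, (csInf_le hbdd hmem).trans ht'.2⟩,
    hS_closure (csInf_mem_closure ⟨t', hmem⟩ hbdd)⟩
  by_contra! htb
  exact hbefore t ⟨ht.1, htb⟩ ht.2

noncomputable def resonantMotion (σ t₀ v t : ℝ) : ℝ :=
  σ * cos (t - t₀) - (v + 1 / 2 * sin t₀) * sin (t - t₀) + 1 / 2 * (t - t₀) * sin t

noncomputable def resonantVelocity (σ t₀ v t : ℝ) : ℝ :=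
  -σ * sin (t - t₀) - (v + 1 / 2 * sin t₀) * cos (t - t₀) + 1 / 2 * sin t +
    1 / 2 * (t - t₀) * cos t

noncomputable def nextImpact (σ t₀ v : ℝ) : ℝ :=
  sInf {t : ℝ | t₀ < t ∧ resonantMotion σ t₀ v t = σ}

noncomputable def resonantRemainder (σ t₀ s : ℝ) : ℝ :=
  σ * (cos s - 1) + s / 2 * sin (t₀ + s)

theorem continuous_resonantMotion (σ t₀ v : ℝ) : Continuous (resonantMotion σ t₀ v) := by
  unfold resonantMotion
  fun_prop

theorem hasDerivAt_resonantMotion (σ t₀ v t : ℝ) :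
    HasDerivAt (resonantMotion σ t₀ v) (resonantVelocity σ t₀ v t) t := by
  have hshift : HasDerivAt (fun t : ℝ => t - t₀) 1 t := (hasDerivAt_id t).sub_const t₀
  have hcos := (hasDerivAt_cos (t - t₀)).comp t hshift
  have hsin := (hasDerivAt_sin (t - t₀)).comp t hshift
  refine (((hcos.const_mul σ).sub (hsin.const_mul (v + 1 / 2 * sin t₀))).add
    ((hshift.const_mul (1 / 2)).mul (hasDerivAt_sin t))).congr_deriv ?_
  unfold resonantVelocity
  ring

theorem resonantMotion_add_sub (σ t₀ v s : ℝ) :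
    resonantMotion σ t₀ v (t₀ + s) - σ =
      resonantRemainder σ t₀ s - (v + 1 / 2 * sin t₀) * sin s := by
  unfold resonantMotion resonantRemainder
  rw [add_sub_cancel_left]
  ring

theorem abs_resonantRemainder_le (σ t₀ : ℝ) {s : ℝ} (hs : 0 ≤ s) :
    |resonantRemainder σ t₀ s| ≤ (|σ| + 1) * s := by
  have hcos : |cos s - 1| ≤ s := by
    simpa [abs_of_nonneg hs] using abs_cos_sub_cos_le s 0
  have hsin : |sin (t₀ + s)| ≤ 1 := abs_sin_le_one _
  calc |resonantRemainder σ t₀ s|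
      ≤ |σ| * |cos s - 1| + s / 2 * |sin (t₀ + s)| := by
        refine (abs_add_le _ _).trans ?_
        rw [abs_mul, abs_mul, abs_of_nonneg (by positivity : 0 ≤ s / 2)]
    _ ≤ (|σ| + 1) * s := by nlinarith [abs_nonneg σ]

section

variable {σ t₀ v δ : ℝ}

theorem resonantMotion_lt {s : ℝ} (hδ : 0 < δ)
    (hv : π ^ 2 * (|σ| + 1) < (v + 1 / 2 * sin t₀) * δ) (hs : 0 < s) (hsδ : s ≤ π - δ) :
    resonantMotion σ t₀ v (t₀ + s) < σ := by
  have hx := resonantMotion_add_sub σ t₀ v s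
  set A := v + 1 / 2 * sin t₀
  have hπ := pi_pos
  have hA : 0 < A := pos_of_mul_pos_left ((by positivity : 0 < π ^ 2 * (|σ| + 1)).trans hv) hδ.le
  have hsin := mul_le_sin_of_le_pi_sub hs.le hδ.le hsδ
  have hr := (abs_le.1 (abs_resonantRemainder_le σ t₀ hs.le)).2
  have : (|σ| + 1) * s < A * sin s := by
    calc (|σ| + 1) * s < A * (2 * δ * s / π ^ 2) := by
          rw [mul_div_assoc', lt_div_iff₀ (by positivity)]
          nlinarith [mul_lt_mul_of_pos_right hv hs, mul_pos (mul_pos hA hδ) hs]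
      _ ≤ A * sin s := by gcongr
  linarith

theorem lt_resonantMotion (hδ : 0 < δ) (hδ1 : δ ≤ 1)
    (hv : π ^ 2 * (|σ| + 1) < (v + 1 / 2 * sin t₀) * δ) :
    σ < resonantMotion σ t₀ v (t₀ + (π + δ)) := by
  have hx := resonantMotion_add_sub σ t₀ v (π + δ)
  rw [add_comm π δ] at hx ⊢
  rw [sin_add_pi] at hx
  set A := v + 1 / 2 * sin t₀
  have hπ := pi_gt_three
  have hA : 0 < A := pos_of_mul_pos_left ((by positivity : 0 < π ^ 2 * (|σ| + 1)).trans hv) hδ.le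
  have hsin := mul_le_sin hδ.le (by linarith)
  have hr := (abs_le.1 (abs_resonantRemainder_le σ t₀ (s := δ + π) (by positivity))).1
  have : (|σ| + 1) * (δ + π) < A * sin δ := by
    calc (|σ| + 1) * (δ + π) < 2 * (A * δ) / π := by
          rw [lt_div_iff₀ (by positivity)]
          nlinarith [mul_le_mul_of_nonneg_left (by linarith : δ + π ≤ 2 * π)
            (by positivity : 0 ≤ (|σ| + 1) * π)]
      _ = A * (2 / π * δ) := by ring
      _ ≤ A * sin δ := by gcongr
  linarith

end

theorem mul_sin_eq_of_resonantMotion_eq {σ t₀ v e : ℝ}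
    (h : resonantMotion σ t₀ v (t₀ + (π + e)) = σ) :
    (v + 1 / 2 * sin t₀) * sin e = σ * (1 + cos e) + (π + e) / 2 * sin (t₀ + e) := by
  have hx := resonantMotion_add_sub σ t₀ v (π + e)
  unfold resonantRemainder at hx
  rw [h, add_comm π e, ← add_assoc, sin_add_pi, cos_add_pi, sin_add_pi] at hx
  linear_combination -hx

theorem resonantVelocity_add_sub (σ t₀ v e : ℝ) :
    resonantVelocity σ t₀ v (t₀ + (π + e)) - v =
      -((v + 1 / 2 * sin t₀) * (1 - cos e)) +
        (σ * sin e + (sin t₀ - sin (t₀ + e)) / 2 - (π + e) / 2 * cos (t₀ + e)) := by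
  unfold resonantVelocity
  rw [add_sub_cancel_left, add_comm π e, ← add_assoc, sin_add_pi, cos_add_pi, sin_add_pi,
    cos_add_pi]
  ring

section

variable (σ t₀ : ℝ)

theorem eventually_nextImpact_mem_Icc {δ : ℝ} (hδ : 0 < δ) (hδ1 : δ ≤ 1) :
    ∀ᶠ v in atTop, nextImpact σ t₀ v ∈ Icc (t₀ + (π - δ)) (t₀ + (π + δ)) ∧
      resonantMotion σ t₀ v (nextImpact σ t₀ v) = σ := by
  have hπ := pi_gt_three
  filter_upwards [eventually_gt_atTop (π ^ 2 * (|σ| + 1) / δ + 1 / 2)] with v hv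
  have hA : π ^ 2 * (|σ| + 1) < (v + 1 / 2 * sin t₀) * δ := by
    rw [← div_lt_iff₀ hδ]
    linarith [neg_one_le_sin t₀]
  have hbefore : ∀ s, 0 < s → s ≤ π - δ → resonantMotion σ t₀ v (t₀ + s) < σ :=
    fun s hs hsδ => resonantMotion_lt hδ hA hs hsδ
  refine sInf_preimage_mem_Icc (continuous_resonantMotion σ t₀ v) (by linarith) (by linarith)
    (fun t ht => ?_) (hbefore _ (by linarith) le_rfl).le (lt_resonantMotion hδ hδ1 hA).le
  simpa using (hbefore (t - t₀) (by linarith [ht.1]) (by linarith [ht.2])).ne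

theorem tendsto_nextImpact_sub_sub_pi :
    Tendsto (fun v => nextImpact σ t₀ v - t₀ - π) atTop (𝓝 0) := by
  refine Metric.tendsto_nhds.2 fun ε hε => ?_
  filter_upwards [eventually_nextImpact_mem_Icc σ t₀ (δ := min (ε / 2) 1) (by positivity)
    (min_le_right _ _)] with v ⟨⟨h₁, h₂⟩, _⟩
  have : min (ε / 2) 1 < ε := (min_le_left _ _).trans_lt (half_lt_self hε)
  rw [Real.dist_eq, sub_zero, abs_lt]
  constructor <;> linarith

theorem tendsto_mul_sin_nextImpact :
    Tendsto (fun v => (v + 1 / 2 * sin t₀) * sin (nextImpact σ t₀ v - t₀ - π)) atTop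
      (𝓝 (2 * σ + π / 2 * sin t₀)) := by
  have hcont : Continuous fun e : ℝ => σ * (1 + cos e) + (π + e) / 2 * sin (t₀ + e) := by
    fun_prop
  refine ((hcont.tendsto' 0 (2 * σ + π / 2 * sin t₀) (by norm_num; ring)).comp
    (tendsto_nextImpact_sub_sub_pi σ t₀)).congr' ?_
  filter_upwards [eventually_nextImpact_mem_Icc σ t₀ one_pos le_rfl] with v ⟨_, hv⟩
  refine (mul_sin_eq_of_resonantMotion_eq ?_).symm
  rwa [add_sub_cancel, add_sub_cancel]

theorem tendsto_nextImpact_sub : Tendsto (fun v => nextImpact σ t₀ v - t₀) atTop (𝓝 π) := by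
  have := (tendsto_nextImpact_sub_sub_pi σ t₀).const_add π
  rw [add_zero] at this
  exact this.congr fun v => by ring

theorem tendsto_mul_nextImpact_sub_sub_pi :
    Tendsto (fun v => v * (nextImpact σ t₀ v - t₀ - π)) atTop
      (𝓝 (2 * σ + π / 2 * sin t₀)) := by
  have hE := tendsto_nextImpact_sub_sub_pi σ t₀
  have := (hE.mul_of_mul_sin (tendsto_mul_sin_nextImpact σ t₀)).sub
    (hE.const_mul (1 / 2 * sin t₀))
  rw [mul_zero, sub_zero] at this
  exact this.congr fun v => by ring

theorem tendsto_resonantVelocity_nextImpact_sub :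
    Tendsto (fun v => resonantVelocity σ t₀ v (nextImpact σ t₀ v) - v) atTop
      (𝓝 (-(π / 2) * cos t₀)) := by
  have hE := tendsto_nextImpact_sub_sub_pi σ t₀
  have hcont : Continuous fun e : ℝ =>
      σ * sin e + (sin t₀ - sin (t₀ + e)) / 2 - (π + e) / 2 * cos (t₀ + e) := by
    fun_prop
  have := (hE.mul_one_sub_cos_of_mul_sin (tendsto_mul_sin_nextImpact σ t₀)).neg.add
    ((hcont.tendsto' 0 (-(π / 2) * cos t₀) (by norm_num)).comp hE)
  rw [neg_zero, zero_add] at this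
  refine this.congr fun v => ?_
  have := resonantVelocity_add_sub σ t₀ v (nextImpact σ t₀ v - t₀ - π)
  rw [show t₀ + (π + (nextImpact σ t₀ v - t₀ - π)) = nextImpact σ t₀ v by ring] at this
  exact this.symm

end

/-- High-velocity asymptotics of the impact map for resonant forcing `ω = 1`:
with next impact time `t₁(v₀)` and incoming velocity `v₁(v₀) = x'(t₁(v₀))`,
one has `t₁(v₀) - t₀ → π`, `v₁(v₀) - v₀ → -(π/2) cos t₀`, and
`v₀ (t₁(v₀) - t₀ - π) → 2σ + (π/2) sin t₀` as `v₀ → ∞`. -/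
theorem impact_oscillator_resonant_asymptotics
    (σ t₀ : ℝ)
    (x xd : ℝ → ℝ → ℝ)
    (hx : ∀ v₀ t, x v₀ t = σ * Real.cos (t - t₀) -
      (v₀ + (1 / 2) * Real.sin t₀) * Real.sin (t - t₀) +
      (1 / 2) * (t - t₀) * Real.sin t)
    (hxd : ∀ v₀ t, HasDerivAt (x v₀) (xd v₀ t) t)
    (t₁ : ℝ → ℝ)
    (ht₁ : ∀ v₀, t₁ v₀ = sInf {t : ℝ | t₀ < t ∧ x v₀ t = σ})
    (v₁ : ℝ → ℝ)
    (hv₁ : ∀ v₀, v₁ v₀ = xd v₀ (t₁ v₀)) :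
    Filter.Tendsto (fun v₀ => t₁ v₀ - t₀) Filter.atTop (nhds π) ∧
    Filter.Tendsto (fun v₀ => v₁ v₀ - v₀) Filter.atTop
      (nhds (-(π / 2) * Real.cos t₀)) ∧
    Filter.Tendsto (fun v₀ => v₀ * (t₁ v₀ - t₀ - π)) Filter.atTop
      (nhds (2 * σ + (π / 2) * Real.sin t₀)) := by
  obtain rfl : x = resonantMotion σ t₀ := funext fun v => funext (hx v)
  obtain rfl : t₁ = nextImpact σ t₀ := funext ht₁
  have hxd' : ∀ v t, xd v t = resonantVelocity σ t₀ v t := fun v t =>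
    (hxd v t).unique (hasDerivAt_resonantMotion σ t₀ v t)
  refine ⟨tendsto_nextImpact_sub σ t₀, ?_, tendsto_mul_nextImpact_sub_sub_pi σ t₀⟩
  simpa only [hv₁, hxd'] using tendsto_resonantVelocity_nextImpact_sub σ t₀
end

section
/- Let ω = 2n for some positive integer n, set γ = 1/(1−ω²), and suppose |σ| < |γ|. Then the elastic impact oscillator ẍ + x = cos(ωt) with wall at x = σ has unbounded trajectories: there exists an elastic impacting motion whose impact velocities satisfy sup_n v_n = ∞ (indeed v_n → ∞). -/
open Real

/-- An elastic impacting motion of the impact oscillator with forcing `p` and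
clearance `σ`: a strictly increasing sequence of impact times `t n → ∞`, a
continuous trajectory `x ≤ σ` with `x (t n) = σ`, twice continuously
differentiable between consecutive impacts where it satisfies `x'' + x = p`,
and at each impact the one-sided velocities satisfy `x'(tₙ⁻) = v n > 0` and
`x'(tₙ⁺) = -(v n)` (coefficient of restitution `r = 1`). -/
def ElasticImpactingMotion (p : ℝ → ℝ) (σ : ℝ) (t v : ℕ → ℝ) (x : ℝ → ℝ) : Prop :=
  StrictMono t ∧
  Filter.Tendsto t Filter.atTop Filter.atTop ∧
  Continuous x ∧
  (∀ s, x s ≤ σ) ∧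
  (∀ n, x (t n) = σ) ∧
  (∀ n, ∃ xd : ℝ → ℝ,
    (∀ s ∈ Set.Ioo (t n) (t (n + 1)), HasDerivAt x (xd s) s) ∧
    (∀ s ∈ Set.Ioo (t n) (t (n + 1)), HasDerivAt xd (p s - x s) s)) ∧
  (∀ n, 0 < v n ∧
    HasDerivWithinAt x (v n) (Set.Iio (t n)) (t n) ∧
    HasDerivWithinAt x (-(v n)) (Set.Ioi (t n)) (t n))

/-! For `ω = 2n` the forcing `cos (ω s)` has period `π`, the distance between consecutive zeros
of the free oscillation `sin (s - τ)`. Pick `t₀` with `γ cos (ω t₀) = σ`, possible because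
`|σ| < |γ|`, and let the impacts happen at `t₀ + kπ`. Between two impacts the motion is an arc
`b sin (s - τ) + γ cos (ω s)`, which equals `σ` at both ends; the elastic reflection turns the
exit speed of one arc into the entry speed of the next, and every arc adds
`2 |γ| ω sin (ω t₀) > 0` to it, so the impact velocities grow linearly. An arc stays behind the
wall once `b ≤ -ω |γ|`, since `|cos (ω s) - cos (ω τ)| ≤ ω sin (s - τ)` on `[τ, τ + π]`. -/

open Set Filter

theorem abs_sin_nat_mul_le (n : ℕ) (x : ℝ) : |sin (n * x)| ≤ n * |sin x| := by
  induction n with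
  | zero => simp
  | succ n ih =>
    calc |sin ((n + 1 : ℕ) * x)| = |sin (n * x) * cos x + cos (n * x) * sin x| := by
          rw [← sin_add]; push_cast; ring_nf
      _ ≤ |sin (n * x)| * |cos x| + |cos (n * x)| * |sin x| := by
          rw [← abs_mul, ← abs_mul]; exact abs_add_le _ _
      _ ≤ n * |sin x| + 1 * |sin x| :=
          add_le_add ((mul_le_of_le_one_right (abs_nonneg _) (abs_cos_le_one x)).trans ih)
            (mul_le_mul_of_nonneg_right (abs_cos_le_one _) (abs_nonneg _))
      _ = (n + 1 : ℕ) * |sin x| := by push_cast; ring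

theorem abs_cos_add_two_nat_mul_sub_cos_le (n : ℕ) (x θ : ℝ) :
    |cos (x + 2 * n * θ) - cos x| ≤ 2 * n * |sin θ| := by
  rw [cos_sub_cos, show (x + 2 * n * θ - x) / 2 = n * θ by ring, abs_mul, abs_mul]
  calc |(-2 : ℝ)| * |sin ((x + 2 * n * θ + x) / 2)| * |sin (n * θ)|
      ≤ 2 * 1 * (n * |sin θ|) := by
        gcongr
        · norm_num
        · exact abs_sin_le_one _
        · exact abs_sin_nat_mul_le n θ
    _ = 2 * n * |sin θ| := by ring

theorem cos_two_nat_mul_add_int_mul_pi (n : ℕ) (k : ℤ) (x : ℝ) :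
    cos (2 * n * (x + k * π)) = cos (2 * n * x) := by
  rw [show 2 * n * (x + k * π) = 2 * n * x + (n * k : ℤ) * (2 * π) by push_cast; ring,
    cos_add_int_mul_two_pi]

theorem sin_two_nat_mul_add_int_mul_pi (n : ℕ) (k : ℤ) (x : ℝ) :
    sin (2 * n * (x + k * π)) = sin (2 * n * x) := by
  rw [show 2 * n * (x + k * π) = 2 * n * x + (n * k : ℤ) * (2 * π) by push_cast; ring,
    sin_add_int_mul_two_pi]

theorem exists_mul_cos_eq_of_abs_lt {σ γ : ℝ} (hσ : |σ| < |γ|) :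
    ∃ φ, γ * cos φ = σ ∧ 0 < sin φ := by
  have hγ : 0 < |γ| := (abs_nonneg σ).trans_lt hσ
  have hr : |σ / γ| < 1 := by rwa [abs_div, div_lt_one hγ]
  obtain ⟨hr₁, hr₂⟩ := abs_lt.1 hr
  refine ⟨arccos (σ / γ), ?_, sin_pos_of_pos_of_lt_pi (arccos_pos.2 hr₂) (arccos_lt_pi.2 hr₁)⟩
  rw [cos_arccos hr₁.le hr₂.le, mul_div_cancel₀ _ (abs_pos.1 hγ)]

section ConcatArcs

variable {t₀ T : ℝ} {F : ℤ → ℝ → ℝ}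

noncomputable def concatArcs (t₀ T : ℝ) (F : ℤ → ℝ → ℝ) (s : ℝ) : ℝ :=
  F ⌊(s - t₀) / T⌋ s

theorem exists_int_mem_Ico (hT : 0 < T) (s : ℝ) :
    ∃ k : ℤ, s ∈ Ico (t₀ + k * T) (t₀ + (k + 1) * T) := by
  refine ⟨⌊(s - t₀) / T⌋, ?_, ?_⟩
  · linarith [(le_div_iff₀ hT).1 (Int.floor_le ((s - t₀) / T))]
  · linarith [(div_lt_iff₀ hT).1 (Int.lt_floor_add_one ((s - t₀) / T))]

theorem exists_int_mem_Ioc (hT : 0 < T) (s : ℝ) :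
    ∃ k : ℤ, s ∈ Ioc (t₀ + k * T) (t₀ + (k + 1) * T) := by
  refine ⟨⌈(s - t₀) / T⌉ - 1, ?_, ?_⟩
  · push_cast
    linarith [(lt_div_iff₀ hT).1 (sub_lt_iff_lt_add.2 (Int.ceil_lt_add_one ((s - t₀) / T)))]
  · push_cast
    linarith [(div_le_iff₀ hT).1 (Int.le_ceil ((s - t₀) / T))]

theorem concatArcs_eq_of_mem_Ico (hT : 0 < T) {k : ℤ} {s : ℝ}
    (hs : s ∈ Ico (t₀ + k * T) (t₀ + (k + 1) * T)) : concatArcs t₀ T F s = F k s := by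
  have hk : ⌊(s - t₀) / T⌋ = k := by
    rw [Int.floor_eq_iff, le_div_iff₀ hT, div_lt_iff₀ hT]
    constructor <;> linarith [hs.1, hs.2]
  rw [concatArcs, hk]

theorem eqOn_concatArcs (hT : 0 < T)
    (hmatch : ∀ k : ℤ, F k (t₀ + (k + 1) * T) = F (k + 1) (t₀ + (k + 1) * T)) (k : ℤ) :
    EqOn (concatArcs t₀ T F) (F k) (Icc (t₀ + k * T) (t₀ + (k + 1) * T)) := by
  intro s hs
  rcases hs.2.lt_or_eq with hlt | rfl
  · exact concatArcs_eq_of_mem_Ico hT ⟨hs.1, hlt⟩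
  · rw [hmatch, concatArcs_eq_of_mem_Ico hT]
    push_cast
    constructor <;> linarith

theorem continuous_concatArcs (hT : 0 < T)
    (hmatch : ∀ k : ℤ, F k (t₀ + (k + 1) * T) = F (k + 1) (t₀ + (k + 1) * T))
    (hF : ∀ k, Continuous (F k)) : Continuous (concatArcs t₀ T F) := by
  have hcont (k : ℤ) : ContinuousOn (concatArcs t₀ T F) (Icc (t₀ + k * T) (t₀ + (k + 1) * T)) :=
    (hF k).continuousOn.congr (eqOn_concatArcs hT hmatch k)
  refine continuous_iff_continuousAt.2 fun s => continuousAt_iff_continuous_left_right.2 ⟨?_, ?_⟩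
  · obtain ⟨k, hk⟩ := exists_int_mem_Ioc hT s (t₀ := t₀)
    exact (hcont k s (Ioc_subset_Icc_self hk)).mono_of_mem_nhdsWithin (Icc_mem_nhdsLE_of_mem hk)
  · obtain ⟨k, hk⟩ := exists_int_mem_Ico hT s (t₀ := t₀)
    exact (hcont k s (Ico_subset_Icc_self hk)).mono_of_mem_nhdsWithin (Icc_mem_nhdsGE_of_mem hk)

theorem hasDerivWithinAt_concatArcs (hT : 0 < T)
    (hmatch : ∀ k : ℤ, F k (t₀ + (k + 1) * T) = F (k + 1) (t₀ + (k + 1) * T)) {k : ℤ} {s y : ℝ}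
    (hs : s ∈ Icc (t₀ + k * T) (t₀ + (k + 1) * T)) (hF : HasDerivAt (F k) y s) :
    HasDerivWithinAt (concatArcs t₀ T F) y (Icc (t₀ + k * T) (t₀ + (k + 1) * T)) s :=
  hF.hasDerivWithinAt.congr (eqOn_concatArcs hT hmatch k) (eqOn_concatArcs hT hmatch k hs)

end ConcatArcs

theorem elasticImpactingMotion_concatArcs {p : ℝ → ℝ} {σ t₀ T : ℝ} (hT : 0 < T)
    {F F' : ℤ → ℝ → ℝ} {v : ℕ → ℝ}
    (hF : ∀ k s, HasDerivAt (F k) (F' k s) s)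
    (hF' : ∀ k : ℕ, ∀ s ∈ Ioo (t₀ + k * T) (t₀ + (k + 1) * T), HasDerivAt (F' k) (p s - F k s) s)
    (hσ : ∀ k : ℤ, F k (t₀ + k * T) = σ ∧ F k (t₀ + (k + 1) * T) = σ)
    (hle : ∀ k : ℤ, ∀ s ∈ Icc (t₀ + k * T) (t₀ + (k + 1) * T), F k s ≤ σ)
    (hv : ∀ k : ℕ, 0 < v k ∧ F' (k - 1) (t₀ + k * T) = v k ∧ F' k (t₀ + k * T) = -v k) :
    ElasticImpactingMotion p σ (fun k => t₀ + k * T) v (concatArcs t₀ T F) := by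
  have hmatch (k : ℤ) : F k (t₀ + (k + 1) * T) = F (k + 1) (t₀ + (k + 1) * T) := by
    rw [(hσ k).2, ← (hσ (k + 1)).1]; push_cast; rfl
  have hderiv {k : ℤ} {s : ℝ} (hs : s ∈ Icc (t₀ + k * T) (t₀ + (k + 1) * T)) :=
    hasDerivWithinAt_concatArcs hT hmatch hs (hF k s)
  refine ⟨fun a b hab => by simpa using mul_lt_mul_of_pos_right (Nat.cast_lt.2 hab) hT,
    tendsto_atTop_add_const_left _ _ (tendsto_natCast_atTop_atTop.atTop_mul_const hT),
    continuous_concatArcs hT hmatch fun k =>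
      continuous_iff_continuousAt.2 fun s => (hF k s).continuousAt,
    fun s => ?_, fun k => ?_, fun k => ⟨F' k, fun s hs => ?_, fun s hs => ?_⟩, fun k => ?_⟩
  · obtain ⟨k, hk⟩ := exists_int_mem_Ico hT s (t₀ := t₀)
    rw [concatArcs_eq_of_mem_Ico hT hk]
    exact hle k s (Ico_subset_Icc_self hk)
  · have h := eqOn_concatArcs hT hmatch k ⟨le_rfl, by linarith⟩
    rw [Int.cast_natCast] at h
    rw [h]
    exact_mod_cast (hσ k).1
  · have hs' : s ∈ Icc (t₀ + (k : ℤ) * T) (t₀ + ((k : ℤ) + 1) * T) := by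
      simpa using Ioo_subset_Icc_self hs
    exact (hderiv hs').hasDerivAt (Icc_mem_nhds (by simpa using hs.1) (by simpa using hs.2))
  · have hs' : s ∈ Icc (t₀ + (k : ℤ) * T) (t₀ + ((k : ℤ) + 1) * T) := by
      simpa using Ioo_subset_Icc_self hs
    rw [eqOn_concatArcs hT hmatch k hs']
    exact hF' k s (by simpa using hs)
  · obtain ⟨hpos, hleft, hright⟩ := hv k
    refine ⟨hpos, ?_, ?_⟩
    · have h := hderiv (k := (k : ℤ) - 1) (s := t₀ + k * T) ⟨by push_cast; linarith, by simp⟩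
      rw [hleft] at h
      push_cast at h
      rw [sub_add_cancel] at h
      exact h.mono_of_mem_nhdsWithin (Icc_mem_nhdsLT (by linarith))
    · have h := hderiv (k := (k : ℤ)) (s := t₀ + k * T) ⟨by simp, by push_cast; linarith⟩
      rw [hright] at h
      exact h.mono_of_mem_nhdsWithin (Icc_mem_nhdsGT (by push_cast; linarith))

section ForcedArc

variable {ω γ : ℝ}

noncomputable def forcedArc (ω γ b τ : ℝ) (s : ℝ) : ℝ :=
  b * sin (s - τ) + γ * cos (ω * s)

theorem hasDerivAt_forcedArc (b τ s : ℝ) :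
    HasDerivAt (forcedArc ω γ b τ) (b * cos (s - τ) - γ * ω * sin (ω * s)) s := by
  have h₁ := ((hasDerivAt_id s).sub_const τ).sin.const_mul b
  have h₂ := ((hasDerivAt_id s).const_mul ω).cos.const_mul γ
  exact (h₁.add h₂).congr_deriv (by simp only [id, mul_one]; ring)

theorem hasDerivAt_deriv_forcedArc (hγ : γ * (1 - ω ^ 2) = 1) (b τ s : ℝ) :
    HasDerivAt (fun s => b * cos (s - τ) - γ * ω * sin (ω * s))
      (cos (ω * s) - forcedArc ω γ b τ s) s := by
  have h₁ := ((hasDerivAt_id s).sub_const τ).cos.const_mul b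
  have h₂ := ((hasDerivAt_id s).const_mul ω).sin.const_mul (γ * ω)
  exact (h₁.sub h₂).congr_deriv (by
    simp only [forcedArc, id, mul_one]
    linear_combination cos (ω * s) * hγ)

theorem forcedArc_le_of_mem_Icc {n : ℕ} {b τ s : ℝ} (hb : b ≤ -(2 * n * |γ|))
    (hs : s ∈ Icc τ (τ + π)) : forcedArc (2 * n) γ b τ s ≤ γ * cos (2 * n * τ) := by
  have hsin : 0 ≤ sin (s - τ) :=
    sin_nonneg_of_nonneg_of_le_pi (by linarith [hs.1]) (by linarith [hs.2])
  have hcos : γ * (cos (2 * n * s) - cos (2 * n * τ)) ≤ 2 * n * |γ| * sin (s - τ) :=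
    calc γ * (cos (2 * n * s) - cos (2 * n * τ))
        ≤ |γ| * |cos (2 * n * τ + 2 * n * (s - τ)) - cos (2 * n * τ)| := by
          rw [← abs_mul, show 2 * n * τ + 2 * n * (s - τ) = 2 * n * s by ring]
          exact le_abs_self _
      _ ≤ |γ| * (2 * n * |sin (s - τ)|) := by
          gcongr
          exact abs_cos_add_two_nat_mul_sub_cos_le n _ _
      _ = 2 * n * |γ| * sin (s - τ) := by rw [abs_of_nonneg hsin]; ring
  have hb' := mul_le_mul_of_nonneg_right hb hsin
  simp only [forcedArc]
  linarith

end ForcedArc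

theorem elasticImpactingMotion_concatArcs_forcedArc {n : ℕ} {σ γ t₀ : ℝ} {b : ℤ → ℝ}
    {v : ℕ → ℝ} (hγ : γ * (1 - (2 * n) ^ 2) = 1) (hσ : γ * cos (2 * n * t₀) = σ)
    (hb : ∀ k, b k ≤ -(2 * n * |γ|))
    (hv : ∀ k : ℕ, 0 < v k ∧ -b (k - 1) - γ * (2 * n) * sin (2 * n * t₀) = v k ∧
      b k - γ * (2 * n) * sin (2 * n * t₀) = -v k) :
    ElasticImpactingMotion (fun s => cos (2 * n * s)) σ (fun k => t₀ + k * π) v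
      (concatArcs t₀ π fun k => forcedArc (2 * n) γ (b k) (t₀ + k * π)) := by
  have hcos (k : ℤ) : γ * cos (2 * n * (t₀ + k * π)) = σ := by
    rw [cos_two_nat_mul_add_int_mul_pi, hσ]
  have hsin (k : ℤ) : sin (2 * n * (t₀ + k * π)) = sin (2 * n * t₀) :=
    sin_two_nat_mul_add_int_mul_pi n k t₀
  refine elasticImpactingMotion_concatArcs pi_pos (fun k s => hasDerivAt_forcedArc _ _ s)
    (fun k s _ => hasDerivAt_deriv_forcedArc hγ _ _ s) (fun k => ⟨?atStart, ?atEnd⟩)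
    (fun k s hs => ?le) (fun k => ⟨(hv k).1, ?left, ?right⟩)
  case atStart =>
    simp only [forcedArc, sub_self, sin_zero, mul_zero, zero_add]
    exact hcos k
  case atEnd =>
    have h := hcos (k + 1)
    push_cast at h
    simp only [forcedArc, show t₀ + (k + 1) * π - (t₀ + k * π) = π by ring, sin_pi, mul_zero,
      zero_add, h]
  case le =>
    rw [← hcos k]
    exact forcedArc_le_of_mem_Icc (hb k) (by convert hs using 2; ring)
  case left =>
    have h := hsin k
    push_cast at h ⊢
    rw [show t₀ + k * π - (t₀ + (k - 1) * π) = π by ring, cos_pi, h, ← (hv k).2.1]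
    ring
  case right =>
    have h := hsin k
    push_cast at h ⊢
    rw [sub_self, cos_zero, h, mul_one, (hv k).2.2]

theorem exists_elasticImpactingMotion_tendsto_atTop {n : ℕ} {σ γ : ℝ} (hn : 0 < n)
    (hγ : γ * (1 - (2 * n) ^ 2) = 1) (hσ : |σ| < |γ|) :
    ∃ (t v : ℕ → ℝ) (x : ℝ → ℝ),
      ElasticImpactingMotion (fun s => cos (2 * n * s)) σ t v x ∧ Tendsto v atTop atTop := by
  obtain ⟨φ, hφ, hsinφ⟩ := exists_mul_cos_eq_of_abs_lt hσ
  have hγneg : γ < 0 := by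
    have : (1 : ℝ) ≤ n := by exact_mod_cast hn
    by_contra! h
    have : γ * (1 - (2 * n) ^ 2) ≤ 0 := mul_nonpos_of_nonneg_of_nonpos h (by nlinarith)
    linarith
  set t₀ := φ / (2 * n)
  have hφt₀ : 2 * n * t₀ = φ := mul_div_cancel₀ φ (by positivity)
  set c := -γ * (2 * n) * sin φ
  have hc : 0 < c := mul_pos (mul_pos (neg_pos.2 hγneg) (by positivity)) hsinφ
  -- Before `t₀` only arc `-1` matters, which must arrive with speed `u 0`; the arcs with `k < 0`
  -- all leave the wall with the least speed `-γ ω` that `forcedArc_le_of_mem_Icc` allows.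
  set u : ℤ → ℝ := fun k => -γ * (2 * n) + 2 * c * max ((k : ℝ) + 1) 0
  have hu (k : ℤ) : -γ * (2 * n) ≤ u k := by
    have := le_max_right ((k : ℝ) + 1) 0
    simp only [u]
    nlinarith
  have hu_nat (k : ℕ) : u k = -γ * (2 * n) + 2 * c * (k + 1) := by
    simp only [u, Int.cast_natCast]
    rw [max_eq_left (by positivity)]
  refine ⟨_, fun k => u k, _,
    elasticImpactingMotion_concatArcs_forcedArc (t₀ := t₀) (b := fun k => -(c + u k)) hγ
      (by rw [hφt₀, hφ]) (fun k => ?slope) (fun k => ⟨?pos, ?left, ?right⟩), ?tendsto⟩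
  case slope =>
    rw [abs_of_neg hγneg]
    linarith [hu k]
  case pos => linarith [hu k, mul_pos (neg_pos.2 hγneg) (by positivity : (0 : ℝ) < 2 * n)]
  case left =>
    have h : u (k - 1) = -γ * (2 * n) + 2 * c * k := by
      simp only [u]
      push_cast
      rw [sub_add_cancel, max_eq_left (by positivity)]
    rw [hφt₀, h, hu_nat]
    ring
  case right =>
    rw [hφt₀]
    ring
  case tendsto =>
    refine tendsto_atTop_mono (fun k => ?_)
      (tendsto_natCast_atTop_atTop.const_mul_atTop (by positivity : (0 : ℝ) < 2 * c))
    rw [hu_nat]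
    nlinarith

/-- At the resonant frequencies `ω = 2n` with `|σ| < |γ|`, `γ = 1/(1 - ω²)`,
the elastic impact oscillator `x'' + x = cos (ω t)` has unbounded trajectories:
there is an elastic impacting motion whose impact velocities tend to infinity. -/
theorem impact_oscillator_unbounded_trajectory
    (n : ℕ) (hn : 0 < n) (ω σ γ : ℝ) (hω : ω = 2 * n)
    (hγ : γ = 1 / (1 - ω ^ 2)) (hσ : |σ| < |γ|) :
    ∃ (t v : ℕ → ℝ) (x : ℝ → ℝ),
      ElasticImpactingMotion (fun s => Real.cos (ω * s)) σ t v x ∧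
      Filter.Tendsto v Filter.atTop Filter.atTop := by
  subst hω
  have hden : 1 - (2 * (n : ℝ)) ^ 2 ≠ 0 := by
    have : (1 : ℝ) ≤ n := by exact_mod_cast hn
    nlinarith
  refine exists_elasticImpactingMotion_tendsto_atTop hn ?_ hσ
  rw [hγ, one_div_mul_cancel hden]
end

section
/- Let λ < 0 and C > 0. There exists ε > 0 such that the following holds: if (s_n) and (t_n) are real sequences with 0 < s₀ ≤ ε and |t₀| ≤ ε, satisfying for every n the recursion bounds |s_{n+1} − s_n(1 + λ s_n)| ≤ C(s_n³ + s_n²|t_n|) and |t_{n+1} − t_n(1 + λ s_n)| ≤ C(s_n²|t_n| + s_n·t_n²), then s_n > 0 for all n, the sequences (s_n) and (|t_n|) are nonincreasing, and s_n → 0 as n → ∞. -/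
/-- The contraction estimate for the resonant unbounded-motion construction:
for `λ < 0` and `C > 0` there is `ε > 0` such that any sequences `(sₙ)`, `(tₙ)`
starting with `0 < s₀ ≤ ε`, `|t₀| ≤ ε` and satisfying the recursion bounds
`|s_{n+1} - sₙ(1 + λ sₙ)| ≤ C (sₙ³ + sₙ² |tₙ|)` and
`|t_{n+1} - tₙ(1 + λ sₙ)| ≤ C (sₙ² |tₙ| + sₙ tₙ²)` have `sₙ > 0` for all `n`,
`(sₙ)` and `(|tₙ|)` nonincreasing, and `sₙ → 0`. -/
theorem resonant_contraction_estimate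
    (lam C : ℝ) (hlam : lam < 0) (hC : 0 < C) :
    ∃ ε > 0, ∀ s t : ℕ → ℝ,
      0 < s 0 → s 0 ≤ ε → |t 0| ≤ ε →
      (∀ n, |s (n + 1) - s n * (1 + lam * s n)| ≤
        C * ((s n) ^ 3 + (s n) ^ 2 * |t n|)) →
      (∀ n, |t (n + 1) - t n * (1 + lam * s n)| ≤
        C * ((s n) ^ 2 * |t n| + s n * (t n) ^ 2)) →
      (∀ n, 0 < s n) ∧ Antitone s ∧ Antitone (fun n => |t n|) ∧
      Filter.Tendsto s Filter.atTop (nhds 0) := by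
  obtain ⟨μ, hμ, rfl⟩ : ∃ μ : ℝ, 0 < μ ∧ lam = -μ := ⟨-lam, by linarith, by ring⟩
  have hε1 : (0:ℝ) < μ / (4 * C) := by positivity
  have hε2 : (0:ℝ) < 1 / (2 * μ) := by positivity
  refine ⟨min (μ / (4 * C)) (1 / (2 * μ)), lt_min hε1 hε2, ?_⟩
  intro s t hs0 hsε htε hrs hrt
  set ε : ℝ := min (μ / (4 * C)) (1 / (2 * μ)) with hεdef
  have hεC : ε ≤ μ / (4 * C) := min_le_left _ _
  have hεμ : ε ≤ 1 / (2 * μ) := min_le_right _ _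
  have key : ∀ n, 0 < s n → s n ≤ ε → |t n| ≤ ε →
      0 < s (n + 1) ∧ s (n + 1) ≤ s n - μ / 2 * (s n) ^ 2 ∧
      |t (n + 1)| ≤ |t n| := by
    intro n ha haε hbε
    have hb0 : (0:ℝ) ≤ |t n| := abs_nonneg _
    have h1 := abs_le.mp (hrs n)
    have h2 := abs_le.mp (hrt n)
    have hCa : C * s n ≤ μ / 4 := by
      have h := haε.trans hεC
      have : C * s n ≤ C * (μ / (4 * C)) := by nlinarith
      calc C * s n ≤ C * (μ / (4 * C)) := this
        _ = μ / 4 := by field_simp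
    have hCb : C * |t n| ≤ μ / 4 := by
      have h := hbε.trans hεC
      have : C * |t n| ≤ C * (μ / (4 * C)) := by nlinarith
      calc C * |t n| ≤ C * (μ / (4 * C)) := this
        _ = μ / 4 := by field_simp
    have hμa : μ * s n ≤ 1 / 2 := by
      have h := haε.trans hεμ
      have : μ * s n ≤ μ * (1 / (2 * μ)) := by nlinarith
      calc μ * s n ≤ μ * (1 / (2 * μ)) := this
        _ = 1 / 2 := by field_simp
    have hsq : (0:ℝ) ≤ (s n) ^ 2 := sq_nonneg _
    have p1 : C * s n * (s n) ^ 2 ≤ μ / 4 * (s n) ^ 2 :=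
      mul_le_mul_of_nonneg_right hCa hsq
    have p2 : C * |t n| * (s n) ^ 2 ≤ μ / 4 * (s n) ^ 2 :=
      mul_le_mul_of_nonneg_right hCb hsq
    have p3 : μ * s n * s n ≤ 1 / 2 * s n :=
      mul_le_mul_of_nonneg_right hμa ha.le
    constructor
    · -- positivity of s (n+1)
      linarith [h1.1, p1, p2, p3]
    constructor
    · -- decrease of s
      linarith [h1.2, p1, p2]
    · -- decrease of |t|
      have hpos : (0:ℝ) ≤ 1 + -μ * s n := by linarith [hμa]
      have htri : |t (n + 1)| ≤ |t (n + 1) - t n * (1 + -μ * s n)| +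
          |t n * (1 + -μ * s n)| := by
        calc |t (n + 1)| = |(t (n + 1) - t n * (1 + -μ * s n)) +
            t n * (1 + -μ * s n)| := by ring_nf
          _ ≤ _ := abs_add_le _ _
      have habs : |t n * (1 + -μ * s n)| = |t n| * (1 + -μ * s n) := by
        rw [abs_mul, abs_of_nonneg hpos]
      rw [habs] at htri
      have q0 : (0:ℝ) ≤ s n * |t n| := mul_nonneg ha.le hb0
      have q1 : C * s n * (s n * |t n|) ≤ μ / 4 * (s n * |t n|) :=
        mul_le_mul_of_nonneg_right hCa q0
      have q2 : C * |t n| * (s n * |t n|) ≤ μ / 4 * (s n * |t n|) :=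
        mul_le_mul_of_nonneg_right hCb q0
      have q3 : (0:ℝ) ≤ μ * (s n * |t n|) := mul_nonneg hμ.le q0
      have h2' := hrt n
      rw [← sq_abs (t n)] at h2'
      linarith [htri, h2', q1, q2, q3]
  -- invariant
  have inv : ∀ n, 0 < s n ∧ s n ≤ ε ∧ |t n| ≤ ε := by
    intro n
    induction n with
    | zero => exact ⟨hs0, hsε, htε⟩
    | succ n ih =>
      obtain ⟨k1, k2, k3⟩ := key n ih.1 ih.2.1 ih.2.2
      have hdec : s (n + 1) ≤ s n := by nlinarith [sq_nonneg (s n)]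
      exact ⟨k1, hdec.trans ih.2.1, k3.trans ih.2.2⟩
  have hspos : ∀ n, 0 < s n := fun n => (inv n).1
  have hsdec : ∀ n, s (n + 1) ≤ s n := by
    intro n
    have := (key n (inv n).1 (inv n).2.1 (inv n).2.2).2.1
    nlinarith [sq_nonneg (s n)]
  have hanti : Antitone s := antitone_nat_of_succ_le hsdec
  have htanti : Antitone (fun n => |t n|) :=
    antitone_nat_of_succ_le fun n =>
      (key n (inv n).1 (inv n).2.1 (inv n).2.2).2.2
  refine ⟨hspos, hanti, htanti, ?_⟩
  have hbdd : BddBelow (Set.range s) := by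
    refine ⟨0, ?_⟩
    rintro x ⟨n, rfl⟩
    exact (hspos n).le
  have htend : Filter.Tendsto s Filter.atTop (nhds (⨅ n, s n)) :=
    tendsto_atTop_ciInf hanti hbdd
  set L : ℝ := ⨅ n, s n with hLdef
  have hL0 : 0 ≤ L := le_ciInf fun n => (hspos n).le
  have ht1 : Filter.Tendsto (fun n => s (n + 1)) Filter.atTop (nhds L) :=
    htend.comp (Filter.tendsto_add_atTop_nat 1)
  have ht2 : Filter.Tendsto (fun n => s n - μ / 2 * (s n) ^ 2)
      Filter.atTop (nhds (L - μ / 2 * L ^ 2)) :=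
    htend.sub ((htend.pow 2).const_mul _)
  have hLle : L ≤ L - μ / 2 * L ^ 2 :=
    le_of_tendsto_of_tendsto' ht1 ht2 fun n =>
      (key n (inv n).1 (inv n).2.1 (inv n).2.2).2.1
  have hLz : L = 0 := by
    by_contra hne
    have hLpos : 0 < L := lt_of_le_of_ne hL0 (Ne.symm hne)
    nlinarith [hLle, mul_pos hμ (mul_pos hLpos hLpos)]
  rwa [hLz] at htend
end
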